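/- Let {φᵢ} and {αⱼ} be orthonormal bases of ℂ^{d₁} and let {χᵢ} and {βⱼ} be orthonormal bases of ℂ^{d₂}. If a density matrix ρ on ℂ^{d₁} ⊗ ℂ^{d₂} has the form ρ = Σ_{i,j} a_{ij} |φᵢ⟩⟨αⱼ| ⊗ |χᵢ⟩⟨βⱼ| (Kronecker products), then ‖ρ‖_γ = Σ_{i,j} |a_{ij}|. -/

import Mathlib

open scoped Matrix Kronecker BigOperators ComplexOrder
open MeasureTheory

namespace Matrix.PosSemidef

/-- The square root of a positive semidefinite matrix, as it stood in Mathlib (Dec 2024). -/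
noncomputable def sqrt {n : Type*} [Fintype n] [DecidableEq n] {𝕜 : Type*} [RCLike 𝕜]
    {A : Matrix n n 𝕜} (hA : A.PosSemidef) : Matrix n n 𝕜 :=
  hA.1.eigenvectorUnitary.1 * Matrix.diagonal ((↑) ∘ (√·) ∘ hA.1.eigenvalues) *
    (star hA.1.eigenvectorUnitary : Matrix n n 𝕜)

end Matrix.PosSemidef

/-- Trace norm of a complex square matrix: `tr √(AᴴA)` (the sum of singular values). -/
noncomputable def traceNorm {n : Type*} [Fintype n] [DecidableEq n] (A : Matrix n n ℂ) : ℝ :=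
  ((Matrix.posSemidef_conjTranspose_mul_self A).sqrt.trace).re

/-- The greatest cross norm `‖·‖_γ` of an operator on `ℂ^{d₁} ⊗ ℂ^{d₂}`: the infimum of
`Σᵢ ‖uᵢ‖₁ ‖vᵢ‖₁` over all finite decompositions `T = Σᵢ uᵢ ⊗ vᵢ` into Kronecker products. -/
noncomputable def gcn {d₁ d₂ : ℕ} (T : Matrix (Fin d₁ × Fin d₂) (Fin d₁ × Fin d₂) ℂ) : ℝ :=
  sInf { r : ℝ | ∃ (n : ℕ) (u : Fin n → Matrix (Fin d₁) (Fin d₁) ℂ)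
      (v : Fin n → Matrix (Fin d₂) (Fin d₂) ℂ),
      T = ∑ i, u i ⊗ₖ v i ∧ r = ∑ i, traceNorm (u i) * traceNorm (v i) }

/-- A density matrix: positive semidefinite with trace one. -/
def IsDensityMatrix {n : Type*} [Fintype n] (ρ : Matrix n n ℂ) : Prop :=
  ρ.PosSemidef ∧ ρ.trace = 1

/-- Separability of a state on `ℂ^{d₁} ⊗ ℂ^{d₂}`: a finite convex-type combination
`ρ = Σᵢ ωᵢ ρᵢ⁽¹⁾ ⊗ ρᵢ⁽²⁾` of Kronecker products of density matrices, with `ωᵢ ≥ 0`. -/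
def IsSeparable' {d₁ d₂ : ℕ} (ρ : Matrix (Fin d₁ × Fin d₂) (Fin d₁ × Fin d₂) ℂ) : Prop :=
  ∃ (n : ℕ) (ω : Fin n → ℝ) (ρ₁ : Fin n → Matrix (Fin d₁) (Fin d₁) ℂ)
    (ρ₂ : Fin n → Matrix (Fin d₂) (Fin d₂) ℂ),
    (∀ i, 0 ≤ ω i) ∧ (∀ i, IsDensityMatrix (ρ₁ i)) ∧ (∀ i, IsDensityMatrix (ρ₂ i)) ∧
    ρ = ∑ i, (ω i : ℂ) • (ρ₁ i ⊗ₖ ρ₂ i)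

/-- The realignment map `𝔄`: `𝔄(ρ)_{(i,j),(k,l)} = ρ_{(i,k),(j,l)}`. -/
def realign {d : ℕ} (ρ : Matrix (Fin d × Fin d) (Fin d × Fin d) ℂ) :
    Matrix (Fin d × Fin d) (Fin d × Fin d) ℂ :=
  Matrix.of fun p q => ρ (p.1, q.1) (p.2, q.2)

/-- `τ(𝔄(ρ))`: the trace norm of the realignment of `ρ`. -/
noncomputable def tauRealign {d : ℕ} (ρ : Matrix (Fin d × Fin d) (Fin d × Fin d) ℂ) : ℝ :=
  traceNorm (realign ρ)

/-- The flip operator `𝔽 = Σ_{i,j} |i⊗j⟩⟨j⊗i|` on `ℂ^d ⊗ ℂ^d`. -/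
def flipOp (d : ℕ) : Matrix (Fin d × Fin d) (Fin d × Fin d) ℂ :=
  Matrix.of fun p q => if p.1 = q.2 ∧ p.2 = q.1 then 1 else 0

/-- The Werner state `ρ_f = (1/(d³−d))((d−f) I + (df−1) 𝔽)` on `ℂ^d ⊗ ℂ^d`. -/
noncomputable def wernerState (d : ℕ) (f : ℝ) : Matrix (Fin d × Fin d) (Fin d × Fin d) ℂ :=
  (((d : ℂ) ^ 3 - d)⁻¹) • (((d : ℂ) - (f : ℂ)) • (1 : Matrix (Fin d × Fin d) (Fin d × Fin d) ℂ)
    + ((d : ℂ) * (f : ℂ) - 1) • flipOp d)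

/-- The maximally entangled vector `|Ψ⁺⟩ = (1/√d) Σᵢ |i⊗i⟩` on `ℂ^d ⊗ ℂ^d`. -/
noncomputable def psiPlus (d : ℕ) : Fin d × Fin d → ℂ :=
  fun p => if p.1 = p.2 then ((1 / Real.sqrt d : ℝ) : ℂ) else 0

/-- The isotropic state `ρ_F = ((1−F)/(d²−1))(I − |Ψ⁺⟩⟨Ψ⁺|) + F |Ψ⁺⟩⟨Ψ⁺|` on `ℂ^d ⊗ ℂ^d`. -/
noncomputable def isotropicState (d : ℕ) (F : ℝ) : Matrix (Fin d × Fin d) (Fin d × Fin d) ℂ :=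
  (((1 - F : ℝ) : ℂ) / ((d : ℂ) ^ 2 - 1)) •
      ((1 : Matrix (Fin d × Fin d) (Fin d × Fin d) ℂ)
        - Matrix.vecMulVec (psiPlus d) (star (psiPlus d)))
    + ((F : ℝ) : ℂ) • Matrix.vecMulVec (psiPlus d) (star (psiPlus d))

/-- Squared Frobenius norm. -/
noncomputable def frobSq {m n : Type*} [Fintype m] [Fintype n] (A : Matrix m n ℂ) : ℝ :=
  ∑ p, ∑ q, Complex.normSq (A p q)

section SqrtPort
open scoped MatrixOrder

lemma Matrix.PosSemidef.sqrt_eq_cfc' {n : Type*} [Fintype n] [DecidableEq n] {A : Matrix n n ℂ}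
    (hA : A.PosSemidef) : hA.sqrt = CFC.sqrt A := by
  rw [CFC.sqrt_eq_real_sqrt A (Matrix.nonneg_iff_posSemidef.mpr hA),
    cfcₙ_eq_cfc (hf0 := Real.sqrt_zero), hA.1.cfc_eq]; rfl

lemma Matrix.PosSemidef.posSemidef_sqrt {n : Type*} [Fintype n] [DecidableEq n]
    {A : Matrix n n ℂ} (hA : A.PosSemidef) : hA.sqrt.PosSemidef := by
  rw [hA.sqrt_eq_cfc']; exact Matrix.nonneg_iff_posSemidef.mp (CFC.sqrt_nonneg A)

lemma Matrix.PosSemidef.sqrt_mul_self {n : Type*} [Fintype n] [DecidableEq n]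
    {A : Matrix n n ℂ} (hA : A.PosSemidef) : hA.sqrt * hA.sqrt = A := by
  rw [hA.sqrt_eq_cfc']; exact CFC.sqrt_mul_sqrt_self A (Matrix.nonneg_iff_posSemidef.mpr hA)

lemma Matrix.PosSemidef.eq_sqrt_of_sq_eq {n : Type*} [Fintype n] [DecidableEq n]
    {A C : Matrix n n ℂ} (hA : A.PosSemidef) (hC : C.PosSemidef) (h : A ^ 2 = C) :
    A = hC.sqrt := by
  rw [hC.sqrt_eq_cfc']
  exact (CFC.sqrt_unique (by rw [← h, sq]) (Matrix.nonneg_iff_posSemidef.mpr hA)).symm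

end SqrtPort

lemma frobSq_nonneg {m n : Type*} [Fintype m] [Fintype n] (A : Matrix m n ℂ) : 0 ≤ frobSq A :=
  Finset.sum_nonneg fun _ _ => Finset.sum_nonneg fun _ _ => Complex.normSq_nonneg _

lemma frobSq_eq_trace {m n : Type*} [Fintype m] [Fintype n] (A : Matrix m n ℂ) :
    (frobSq A : ℂ) = (Aᴴ * A).trace := by
  simp only [Matrix.trace, Matrix.diag, Matrix.mul_apply, Matrix.conjTranspose_apply, frobSq]
  push_cast
  rw [Finset.sum_comm]
  congr 1; ext p; congr 1; ext q
  rw [Complex.normSq_eq_conj_mul_self]; rfl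

lemma frobSq_conjTranspose {m n : Type*} [Fintype m] [Fintype n] (A : Matrix m n ℂ) :
    frobSq Aᴴ = frobSq A := by
  unfold frobSq
  rw [Finset.sum_comm]
  simp [Matrix.conjTranspose_apply, Complex.normSq_conj]

lemma frobSq_conjTranspose_mul_le {ι κ μ : Type*} [Fintype ι] [Fintype κ] [Fintype μ]
    [DecidableEq ι] [DecidableEq κ] (X : Matrix ι κ ℂ) (hX : Xᴴ * X = 1) (N : Matrix ι μ ℂ) :
    frobSq (Xᴴ * N) ≤ frobSq N := by
  set P : Matrix ι ι ℂ := X * Xᴴ with hP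
  have hPh : Pᴴ = P := by simp [hP, Matrix.conjTranspose_mul]
  have hP2 : P * P = P := by
    rw [hP, Matrix.mul_assoc, ← Matrix.mul_assoc Xᴴ, hX, Matrix.one_mul]
  have key : (frobSq N : ℂ) = (frobSq (Xᴴ * N) : ℂ) + (frobSq ((1 - P) * N) : ℂ) := by
    rw [frobSq_eq_trace, frobSq_eq_trace, frobSq_eq_trace]
    have h1 : (Xᴴ * N)ᴴ * (Xᴴ * N) = Nᴴ * (P * N) := by
      rw [Matrix.conjTranspose_mul, Matrix.conjTranspose_conjTranspose, Matrix.mul_assoc,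
        ← Matrix.mul_assoc X, hP]
    have h2 : ((1 - P) * N)ᴴ * ((1 - P) * N) = Nᴴ * N - Nᴴ * (P * N) := by
      have h1mP : (1 - P)ᴴ = 1 - P := by rw [Matrix.conjTranspose_sub, Matrix.conjTranspose_one, hPh]
      rw [Matrix.conjTranspose_mul, h1mP]
      have : (1 - P) * (1 - P) = 1 - P := by
        rw [Matrix.sub_mul, Matrix.one_mul, Matrix.mul_sub, Matrix.mul_one, hP2, sub_self,
          sub_zero]
      rw [Matrix.mul_assoc, ← Matrix.mul_assoc (1 - P), this, Matrix.sub_mul, Matrix.one_mul,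
        Matrix.mul_sub, Matrix.mul_assoc]
    rw [h1, h2, Matrix.trace_sub]
    ring
  have h0 := frobSq_nonneg ((1 - P) * N)
  have := congrArg Complex.re key
  simp only [Complex.add_re, Complex.ofReal_re] at this
  linarith

lemma frobSq_mul_le {ι κ μ : Type*} [Fintype ι] [Fintype κ] [Fintype μ]
    [DecidableEq ι] [DecidableEq κ] (Y : Matrix ι κ ℂ) (hY : Yᴴ * Y = 1) (M : Matrix μ ι ℂ) :
    frobSq (M * Y) ≤ frobSq M := by
  rw [← frobSq_conjTranspose (M * Y), Matrix.conjTranspose_mul, ← frobSq_conjTranspose M]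
  exact frobSq_conjTranspose_mul_le Y hY Mᴴ

lemma isHermitian_trace_eq {n : Type*} [Fintype n] [DecidableEq n] {S : Matrix n n ℂ}
    (hS : S.IsHermitian) : S.trace = ∑ i, (hS.eigenvalues i : ℂ) := by
  have hU : star (hS.eigenvectorUnitary : Matrix n n ℂ) * (hS.eigenvectorUnitary : Matrix n n ℂ)
      = 1 := Matrix.mem_unitaryGroup_iff'.mp hS.eigenvectorUnitary.2
  conv_lhs => rw [hS.spectral_theorem, Unitary.conjStarAlgAut_apply]
  rw [Matrix.trace_mul_cycle, hU, Matrix.one_mul, Matrix.trace_diagonal]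
  rfl

lemma isHermitian_trace_sq_eq {n : Type*} [Fintype n] [DecidableEq n] {S : Matrix n n ℂ}
    (hS : S.IsHermitian) : (S * S).trace = ∑ i, ((hS.eigenvalues i : ℂ)) ^ 2 := by
  have hU : star (hS.eigenvectorUnitary : Matrix n n ℂ) * (hS.eigenvectorUnitary : Matrix n n ℂ)
      = 1 := Matrix.mem_unitaryGroup_iff'.mp hS.eigenvectorUnitary.2
  set U : Matrix n n ℂ := (hS.eigenvectorUnitary : Matrix n n ℂ) with hUdef
  set D : Matrix n n ℂ := Matrix.diagonal (RCLike.ofReal ∘ hS.eigenvalues) with hDdef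
  have h1 : S * S = U * ((D * D) * star U) := by
    conv_lhs => rw [hS.spectral_theorem, Unitary.conjStarAlgAut_apply]
    simp only [Matrix.mul_assoc, ← hUdef, ← hDdef]
    congr 1; congr 1
    rw [← Matrix.mul_assoc, hU, Matrix.one_mul]
  rw [h1, Matrix.trace_mul_comm, Matrix.mul_assoc, hU, Matrix.mul_one, hDdef,
    Matrix.diagonal_mul_diagonal, Matrix.trace_diagonal]
  simp [pow_two]

lemma traceNorm_nonneg {n : Type*} [Fintype n] [DecidableEq n] (A : Matrix n n ℂ) :
    0 ≤ traceNorm A := by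
  have hA := Matrix.posSemidef_conjTranspose_mul_self A
  have hS := hA.posSemidef_sqrt
  unfold traceNorm
  rw [isHermitian_trace_eq hS.1, Complex.re_sum]
  exact Finset.sum_nonneg fun i _ => by
    simpa using hS.eigenvalues_nonneg i

lemma traceNorm_eq_sum_eigenvalues {n : Type*} [Fintype n] [DecidableEq n] (A : Matrix n n ℂ) :
    traceNorm A = ∑ i, (Matrix.posSemidef_conjTranspose_mul_self A).posSemidef_sqrt.1.eigenvalues i
    := by
  unfold traceNorm
  rw [isHermitian_trace_eq (Matrix.posSemidef_conjTranspose_mul_self A).posSemidef_sqrt.1,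
    Complex.re_sum]
  simp

lemma frobSq_le_sq_traceNorm {n : Type*} [Fintype n] [DecidableEq n] (A : Matrix n n ℂ) :
    frobSq A ≤ (traceNorm A) ^ 2 := by
  have hA := Matrix.posSemidef_conjTranspose_mul_self A
  have hS := hA.posSemidef_sqrt
  have h1 : (frobSq A : ℂ) = ∑ i, ((hS.1.eigenvalues i : ℂ)) ^ 2 := by
    rw [frobSq_eq_trace]
    conv_lhs => rw [← hA.sqrt_mul_self]
    exact isHermitian_trace_sq_eq hS.1
  have h2 : traceNorm A = ∑ i, hS.1.eigenvalues i := traceNorm_eq_sum_eigenvalues A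
  have h1' : frobSq A = ∑ i, (hS.1.eigenvalues i) ^ 2 := by exact_mod_cast h1
  rw [h1', h2]
  have hnn : ∀ i : n, 0 ≤ hS.1.eigenvalues i := hS.eigenvalues_nonneg
  rw [pow_two, Finset.sum_mul]
  refine Finset.sum_le_sum fun i _ => ?_
  rw [pow_two]
  exact mul_le_mul_of_nonneg_left
    (Finset.single_le_sum (fun j _ => hnn j) (Finset.mem_univ i)) (hnn i)

lemma traceNorm_smul_vecMulVec {d : ℕ} (c : ℂ) (x y : Fin d → ℂ)
    (hx : ∑ k, (starRingEnd ℂ) (x k) * x k = 1)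
    (hy : ∑ k, (starRingEnd ℂ) (y k) * y k = 1) :
    traceNorm (c • Matrix.vecMulVec x (star y)) = ‖c‖ := by
  set A := c • Matrix.vecMulVec x (star y) with hAdef
  set B := ((‖c‖ : ℝ) : ℂ) • Matrix.vecMulVec y (star y) with hBdef
  have hB : B.PosSemidef := by
    have : B = (Matrix.replicateCol Unit (((Real.sqrt (‖c‖) : ℝ) : ℂ) • y)) *
        (Matrix.replicateCol Unit (((Real.sqrt (‖c‖) : ℝ) : ℂ) • y))ᴴ := by
      ext i j
      simp [hBdef, Matrix.mul_apply, Matrix.vecMulVec_apply, Matrix.conjTranspose_apply,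
        Pi.smul_apply, smul_eq_mul]
      have hs : ((Real.sqrt (‖c‖) : ℝ) : ℂ) * ((Real.sqrt (‖c‖) : ℝ) : ℂ)
          = ((‖c‖ : ℝ) : ℂ) := by
        rw [← Complex.ofReal_mul, Real.mul_self_sqrt (norm_nonneg c)]
      rw [← hs]; ring
    rw [this]
    exact Matrix.posSemidef_self_mul_conjTranspose _
  have hsq : B ^ 2 = Aᴴ * A := by
    have hyy : Matrix.vecMulVec y (star y) * Matrix.vecMulVec y (star y)
        = Matrix.vecMulVec y (star y) := by
      ext i j
      simp only [Matrix.mul_apply, Matrix.vecMulVec_apply, Pi.star_apply]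
      rw [show ∑ k, y i * star (y k) * (y k * star (y j))
          = (∑ k, (starRingEnd ℂ) (y k) * y k) * (y i * star (y j)) by
        rw [Finset.sum_mul]; congr 1; ext k; simp [RingHom.coe_coe]; ring]
      rw [hy, one_mul]
    have hAHA : Aᴴ * A = ((‖c‖ : ℝ) : ℂ) ^ 2 • Matrix.vecMulVec y (star y) := by
      rw [hAdef, Matrix.conjTranspose_smul, Matrix.smul_mul, Matrix.mul_smul, smul_smul]
      have h1 : (Matrix.vecMulVec x (star y))ᴴ = Matrix.vecMulVec y (star x) := by
        ext i j
        simp [Matrix.conjTranspose_apply, Matrix.vecMulVec_apply, mul_comm]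
      rw [h1]
      have h2 : Matrix.vecMulVec y (star x) * Matrix.vecMulVec x (star y)
          = Matrix.vecMulVec y (star y) := by
        ext i j
        simp only [Matrix.mul_apply, Matrix.vecMulVec_apply, Pi.star_apply]
        rw [show ∑ k, y i * star (x k) * (x k * star (y j))
            = (∑ k, (starRingEnd ℂ) (x k) * x k) * (y i * star (y j)) by
          rw [Finset.sum_mul]; congr 1; ext k; simp [RingHom.coe_coe]; ring]
        rw [hx, one_mul]
      rw [h2]
      congr 1
      rw [Complex.star_def, ← Complex.normSq_eq_conj_mul_self]
      norm_cast
      exact (Complex.sq_norm c).symm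
    rw [hAHA, pow_two, hBdef, Matrix.smul_mul, Matrix.mul_smul, smul_smul, hyy, ← pow_two]
  have hBs : B = (Matrix.posSemidef_conjTranspose_mul_self A).sqrt :=
    hB.eq_sqrt_of_sq_eq (Matrix.posSemidef_conjTranspose_mul_self A) hsq
  unfold traceNorm
  rw [← hBs, hBdef, Matrix.trace_smul]
  have htr : (Matrix.vecMulVec y (star y)).trace = 1 := by
    rw [Matrix.trace]
    rw [show ∑ i, (Matrix.vecMulVec y (star y)).diag i = ∑ i, (starRingEnd ℂ) (y i) * y i by
      congr 1; ext i; simp [Matrix.vecMulVec_apply, Matrix.diag, RingHom.coe_coe]; ring]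
    exact hy
  rw [htr]
  simp

lemma orth_sandwich {d m₁ m₂ : ℕ} (φ : Fin m₁ → Fin d → ℂ) (α : Fin m₂ → Fin d → ℂ)
    (hφ : ∀ i j, ∑ k, (starRingEnd ℂ) (φ i k) * φ j k = if i = j then 1 else 0)
    (hα : ∀ i j, ∑ k, (starRingEnd ℂ) (α i k) * α j k = if i = j then 1 else 0)
    (i' : Fin m₁) (j' : Fin m₂) :
    (Matrix.of fun (p : Fin d) (i : Fin m₁) => φ i p)ᴴ *
      Matrix.vecMulVec (φ i') (star (α j')) *
      (Matrix.of fun (q : Fin d) (j : Fin m₂) => α j q)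
      = Matrix.single i' j' 1 := by
  ext i j
  simp only [Matrix.mul_apply, Matrix.conjTranspose_apply, Matrix.of_apply,
    Matrix.vecMulVec_apply, Pi.star_apply, Complex.star_def]
  rw [show (∑ q, (∑ p, (starRingEnd ℂ) (φ i p) * (φ i' p * (starRingEnd ℂ) (α j' q))) * α j q)
      = (∑ p, (starRingEnd ℂ) (φ i p) * φ i' p) * (∑ q, (starRingEnd ℂ) (α j' q) * α j q) by
    rw [Finset.sum_mul_sum, Finset.sum_comm]
    refine Finset.sum_congr rfl fun q _ => ?_
    rw [Finset.sum_mul]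
    exact Finset.sum_congr rfl fun p _ => by ring]
  rw [hφ i i', hα j' j, Matrix.single]
  simp only [Matrix.of_apply]
  have e1 : (i' = i) ↔ (i = i') := eq_comm
  have e2 : (j' = j) ↔ (j = j') := eq_comm
  by_cases h1 : i = i' <;> by_cases h2 : j = j' <;> simp [h1, h2, e1, e2]

lemma kroneckerCT {l m n p : Type*} (A : Matrix l m ℂ) (B : Matrix n p ℂ) :
    (A ⊗ₖ B)ᴴ = Aᴴ ⊗ₖ Bᴴ := by
  ext ⟨i, j⟩ ⟨k, l'⟩
  simp [Matrix.conjTranspose_apply, Matrix.kroneckerMap_apply, mul_comm]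

lemma cs_sum {ι : Type*} [Fintype ι] (f g : ι → ℝ) (hf : ∀ i, 0 ≤ f i) (hg : ∀ i, 0 ≤ g i) :
    ∑ i, f i * g i ≤ Real.sqrt (∑ i, f i ^ 2) * Real.sqrt (∑ i, g i ^ 2) := by
  have h := Finset.sum_mul_sq_le_sq_mul_sq Finset.univ f g
  have h0 : 0 ≤ ∑ i, f i * g i :=
    Finset.sum_nonneg fun i _ => mul_nonneg (hf i) (hg i)
  calc ∑ i, f i * g i = Real.sqrt ((∑ i, f i * g i) ^ 2) := (Real.sqrt_sq h0).symm
    _ ≤ Real.sqrt ((∑ i, f i ^ 2) * (∑ i, g i ^ 2)) := Real.sqrt_le_sqrt h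
    _ = Real.sqrt (∑ i, f i ^ 2) * Real.sqrt (∑ i, g i ^ 2) :=
        Real.sqrt_mul (Finset.sum_nonneg fun i _ => sq_nonneg _) _

lemma sqrt_frobSq_le_traceNorm {n : Type*} [Fintype n] [DecidableEq n] (A : Matrix n n ℂ) :
    Real.sqrt (frobSq A) ≤ traceNorm A := by
  have h := frobSq_le_sq_traceNorm A
  have h2 := traceNorm_nonneg A
  calc Real.sqrt (frobSq A) ≤ Real.sqrt ((traceNorm A) ^ 2) := Real.sqrt_le_sqrt h
    _ = traceNorm A := Real.sqrt_sq h2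

/-- If a density matrix has the form `ρ = Σ_{i,j} a_{ij} |φᵢ⟩⟨αⱼ| ⊗ |χᵢ⟩⟨βⱼ|` with `{φᵢ}`,
`{αⱼ}` orthonormal in `ℂ^{d₁}` and `{χᵢ}`, `{βⱼ}` orthonormal in `ℂ^{d₂}`, then
`‖ρ‖_γ = Σ_{i,j} |a_{ij}|`. -/
theorem gcn_of_biorthogonal_form (d₁ d₂ m₁ m₂ : ℕ)
    (φ : Fin m₁ → Fin d₁ → ℂ) (α : Fin m₂ → Fin d₁ → ℂ)
    (χ : Fin m₁ → Fin d₂ → ℂ) (β : Fin m₂ → Fin d₂ → ℂ)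
    (hφ : ∀ i j, ∑ k, (starRingEnd ℂ) (φ i k) * φ j k = if i = j then 1 else 0)
    (hα : ∀ i j, ∑ k, (starRingEnd ℂ) (α i k) * α j k = if i = j then 1 else 0)
    (hχ : ∀ i j, ∑ k, (starRingEnd ℂ) (χ i k) * χ j k = if i = j then 1 else 0)
    (hβ : ∀ i j, ∑ k, (starRingEnd ℂ) (β i k) * β j k = if i = j then 1 else 0)
    (a : Fin m₁ → Fin m₂ → ℂ)
    (ρ : Matrix (Fin d₁ × Fin d₂) (Fin d₁ × Fin d₂) ℂ) (hρ : IsDensityMatrix ρ)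
    (hform : ρ = ∑ i, ∑ j, a i j •
      (Matrix.vecMulVec (φ i) (star (α j)) ⊗ₖ Matrix.vecMulVec (χ i) (star (β j)))) :
    gcn ρ = ∑ i, ∑ j, ‖a i j‖ := by
  classical
  -- the target value
  set r₀ : ℝ := ∑ i, ∑ j, ‖a i j‖ with hr₀
  -- the witness decomposition
  set e := (finProdFinEquiv : Fin m₁ × Fin m₂ ≃ Fin (m₁ * m₂)) with he
  set u₀ : Fin (m₁ * m₂) → Matrix (Fin d₁) (Fin d₁) ℂ := fun k =>
    a (e.symm k).1 (e.symm k).2 • Matrix.vecMulVec (φ (e.symm k).1) (star (α (e.symm k).2))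
    with hu₀
  set v₀ : Fin (m₁ * m₂) → Matrix (Fin d₂) (Fin d₂) ℂ := fun k =>
    Matrix.vecMulVec (χ (e.symm k).1) (star (β (e.symm k).2)) with hv₀
  have hsum : ρ = ∑ k, u₀ k ⊗ₖ v₀ k := by
    rw [hform, ← Equiv.sum_comp e (fun k => u₀ k ⊗ₖ v₀ k)]
    rw [Fintype.sum_prod_type]
    refine Finset.sum_congr rfl fun i _ => Finset.sum_congr rfl fun j _ => ?_
    simp only [hu₀, hv₀, Equiv.symm_apply_apply, Matrix.smul_kronecker]
  have hterms : ∀ k, traceNorm (u₀ k) * traceNorm (v₀ k)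
      = ‖a (e.symm k).1 (e.symm k).2‖ := by
    intro k
    have h1 : traceNorm (u₀ k) = ‖a (e.symm k).1 (e.symm k).2‖ :=
      traceNorm_smul_vecMulVec _ _ _ (by simpa using hφ (e.symm k).1 (e.symm k).1)
        (by simpa using hα (e.symm k).2 (e.symm k).2)
    have h2 : traceNorm (v₀ k) = 1 := by
      have := traceNorm_smul_vecMulVec (1 : ℂ) (χ (e.symm k).1) (β (e.symm k).2)
        (by simpa using hχ (e.symm k).1 (e.symm k).1)
        (by simpa using hβ (e.symm k).2 (e.symm k).2)
      rw [one_smul] at this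
      simpa [hv₀] using this
    rw [h1, h2, mul_one]
  have hr₀sum : r₀ = ∑ k, traceNorm (u₀ k) * traceNorm (v₀ k) := by
    have hp : ∀ p : Fin m₁ × Fin m₂,
        traceNorm (u₀ (e p)) * traceNorm (v₀ (e p)) = ‖a p.1 p.2‖ := by
      intro p; rw [hterms (e p)]; simp
    calc r₀ = ∑ p : Fin m₁ × Fin m₂, ‖a p.1 p.2‖ :=
          (Fintype.sum_prod_type (f := fun p : Fin m₁ × Fin m₂ => ‖a p.1 p.2‖)).symm
      _ = ∑ p : Fin m₁ × Fin m₂, traceNorm (u₀ (e p)) * traceNorm (v₀ (e p)) :=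
          Finset.sum_congr rfl fun p _ => (hp p).symm
      _ = ∑ k, traceNorm (u₀ k) * traceNorm (v₀ k) :=
          Equiv.sum_comp e (fun k => traceNorm (u₀ k) * traceNorm (v₀ k))
  have hmem : r₀ ∈ { r : ℝ | ∃ (n : ℕ) (u : Fin n → Matrix (Fin d₁) (Fin d₁) ℂ)
      (v : Fin n → Matrix (Fin d₂) (Fin d₂) ℂ),
      ρ = ∑ i, u i ⊗ₖ v i ∧ r = ∑ i, traceNorm (u i) * traceNorm (v i) } :=
    ⟨m₁ * m₂, u₀, v₀, hsum, hr₀sum⟩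
  -- the lower bound
  have hlb : ∀ r ∈ { r : ℝ | ∃ (n : ℕ) (u : Fin n → Matrix (Fin d₁) (Fin d₁) ℂ)
      (v : Fin n → Matrix (Fin d₂) (Fin d₂) ℂ),
      ρ = ∑ i, u i ⊗ₖ v i ∧ r = ∑ i, traceNorm (u i) * traceNorm (v i) }, r₀ ≤ r := by
    rintro r ⟨N, u, v, hdecomp, rfl⟩
    set Φ : Matrix (Fin d₁) (Fin m₁) ℂ := Matrix.of fun p i => φ i p with hΦdef
    set Aα : Matrix (Fin d₁) (Fin m₂) ℂ := Matrix.of fun q j => α j q with hAαdef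
    set Xχ : Matrix (Fin d₂) (Fin m₁) ℂ := Matrix.of fun p i => χ i p with hXχdef
    set Bβ : Matrix (Fin d₂) (Fin m₂) ℂ := Matrix.of fun q j => β j q with hBβdef
    have hΦ1 : Φᴴ * Φ = 1 := by
      ext i j
      simp only [Matrix.mul_apply, Matrix.conjTranspose_apply, Matrix.of_apply,
        Matrix.one_apply, Complex.star_def, hΦdef]
      exact hφ i j
    have hAα1 : Aαᴴ * Aα = 1 := by
      ext i j
      simp only [Matrix.mul_apply, Matrix.conjTranspose_apply, Matrix.of_apply,
        Matrix.one_apply, Complex.star_def, hAαdef]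
      exact hα i j
    have hXχ1 : Xχᴴ * Xχ = 1 := by
      ext i j
      simp only [Matrix.mul_apply, Matrix.conjTranspose_apply, Matrix.of_apply,
        Matrix.one_apply, Complex.star_def, hXχdef]
      exact hχ i j
    have hBβ1 : Bβᴴ * Bβ = 1 := by
      ext i j
      simp only [Matrix.mul_apply, Matrix.conjTranspose_apply, Matrix.of_apply,
        Matrix.one_apply, Complex.star_def, hBβdef]
      exact hβ i j
    set C : Fin N → Matrix (Fin m₁) (Fin m₂) ℂ := fun k => Φᴴ * u k * Aα with hC
    set D : Fin N → Matrix (Fin m₁) (Fin m₂) ℂ := fun k => Xχᴴ * v k * Bβ with hD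
    -- the key identity
    have hW : ∑ k, C k ⊗ₖ D k = ∑ i', ∑ j', a i' j' •
        (Matrix.single i' j' (1 : ℂ) ⊗ₖ Matrix.single i' j' (1 : ℂ)) := by
      have lhs_eq : ∑ k, C k ⊗ₖ D k = (Φ ⊗ₖ Xχ)ᴴ * ρ * (Aα ⊗ₖ Bβ) := by
        rw [hdecomp, Matrix.mul_sum, Matrix.sum_mul]
        refine Finset.sum_congr rfl fun k _ => ?_
        rw [kroneckerCT, Matrix.mul_kronecker_mul, Matrix.mul_kronecker_mul]
      have rhs_eq : (Φ ⊗ₖ Xχ)ᴴ * ρ * (Aα ⊗ₖ Bβ) = ∑ i', ∑ j', a i' j' •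
          (Matrix.single i' j' (1 : ℂ) ⊗ₖ Matrix.single i' j' (1 : ℂ)) := by
        rw [hform]
        rw [Matrix.mul_sum, Matrix.sum_mul]
        refine Finset.sum_congr rfl fun i' _ => ?_
        rw [Matrix.mul_sum, Matrix.sum_mul]
        refine Finset.sum_congr rfl fun j' _ => ?_
        rw [Matrix.mul_smul, Matrix.smul_mul]
        congr 1
        rw [kroneckerCT, ← Matrix.mul_kronecker_mul, ← Matrix.mul_kronecker_mul]
        rw [hΦdef, hAαdef, hXχdef, hBβdef]
        rw [orth_sandwich φ α hφ hα i' j', orth_sandwich χ β hχ hβ i' j']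
      rw [lhs_eq, rhs_eq]
    have key : ∀ (i : Fin m₁) (j : Fin m₂), ∑ k, C k i j * D k i j = a i j := by
      intro i j
      have h1 := congrFun (congrFun hW (i, i)) (j, j)
      simp only [Matrix.sum_apply, Matrix.kroneckerMap_apply, Matrix.smul_apply,
        Matrix.single, Matrix.of_apply, smul_eq_mul] at h1
      have hsimp : ∀ (x : Fin m₁) (y : Fin m₂),
          a x y * ((if x = i ∧ y = j then (1 : ℂ) else 0) * if x = i ∧ y = j then 1 else 0)
          = if x = i ∧ y = j then a x y else 0 := by
        intro x y
        by_cases h : x = i ∧ y = j <;> simp [h]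
      have coll : ∑ x : Fin m₁, ∑ y : Fin m₂, (if x = i ∧ y = j then a x y else 0) = a i j := by
        rw [Finset.sum_eq_single i]
        · rw [Finset.sum_eq_single j]
          · simp
          · intro b _ hb; simp [hb]
          · intro h; exact absurd (Finset.mem_univ j) h
        · intro b _ hb
          refine Finset.sum_eq_zero fun y _ => ?_
          simp [hb]
        · intro h; exact absurd (Finset.mem_univ i) h
      rw [h1]
      simp only [hsimp]
      exact coll
    -- per-k bound
    have hk : ∀ k, (∑ p : Fin m₁ × Fin m₂,
        ‖C k p.1 p.2‖ * ‖D k p.1 p.2‖)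
        ≤ traceNorm (u k) * traceNorm (v k) := by
      intro k
      have hcs := cs_sum (fun p : Fin m₁ × Fin m₂ => ‖C k p.1 p.2‖)
        (fun p => ‖D k p.1 p.2‖) (fun p => norm_nonneg _)
        (fun p => norm_nonneg _)
      have hCf : ∑ p : Fin m₁ × Fin m₂, ‖C k p.1 p.2‖ ^ 2 = frobSq (C k) := by
        have h2 : frobSq (C k) = ∑ p : Fin m₁ × Fin m₂, Complex.normSq (C k p.1 p.2) :=
          (Fintype.sum_prod_type (f := fun p : Fin m₁ × Fin m₂ =>
            Complex.normSq (C k p.1 p.2))).symm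
        rw [h2]
        exact Finset.sum_congr rfl fun p _ => Complex.sq_norm _
      have hDf : ∑ p : Fin m₁ × Fin m₂, ‖D k p.1 p.2‖ ^ 2 = frobSq (D k) := by
        have h2 : frobSq (D k) = ∑ p : Fin m₁ × Fin m₂, Complex.normSq (D k p.1 p.2) :=
          (Fintype.sum_prod_type (f := fun p : Fin m₁ × Fin m₂ =>
            Complex.normSq (D k p.1 p.2))).symm
        rw [h2]
        exact Finset.sum_congr rfl fun p _ => Complex.sq_norm _
      rw [hCf, hDf] at hcs
      have hCle : Real.sqrt (frobSq (C k)) ≤ traceNorm (u k) := by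
        have h1 : frobSq (C k) ≤ frobSq (u k) := by
          rw [hC]
          calc frobSq (Φᴴ * u k * Aα) ≤ frobSq (Φᴴ * u k) := frobSq_mul_le Aα hAα1 _
            _ = frobSq (Φᴴ * (u k * 1)) := by rw [Matrix.mul_one]
            _ ≤ frobSq (u k * 1) := frobSq_conjTranspose_mul_le Φ hΦ1 _
            _ = frobSq (u k) := by rw [Matrix.mul_one]
        calc Real.sqrt (frobSq (C k)) ≤ Real.sqrt (frobSq (u k)) := Real.sqrt_le_sqrt h1
          _ ≤ traceNorm (u k) := sqrt_frobSq_le_traceNorm _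
      have hDle : Real.sqrt (frobSq (D k)) ≤ traceNorm (v k) := by
        have h1 : frobSq (D k) ≤ frobSq (v k) := by
          rw [hD]
          calc frobSq (Xχᴴ * v k * Bβ) ≤ frobSq (Xχᴴ * v k) := frobSq_mul_le Bβ hBβ1 _
            _ = frobSq (Xχᴴ * (v k * 1)) := by rw [Matrix.mul_one]
            _ ≤ frobSq (v k * 1) := frobSq_conjTranspose_mul_le Xχ hXχ1 _
            _ = frobSq (v k) := by rw [Matrix.mul_one]
        calc Real.sqrt (frobSq (D k)) ≤ Real.sqrt (frobSq (v k)) := Real.sqrt_le_sqrt h1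
          _ ≤ traceNorm (v k) := sqrt_frobSq_le_traceNorm _
      calc (∑ p : Fin m₁ × Fin m₂, ‖C k p.1 p.2‖ * ‖D k p.1 p.2‖)
          ≤ Real.sqrt (frobSq (C k)) * Real.sqrt (frobSq (D k)) := hcs
        _ ≤ traceNorm (u k) * traceNorm (v k) :=
            mul_le_mul hCle hDle (Real.sqrt_nonneg _) (traceNorm_nonneg _)
    -- assemble
    calc r₀ = ∑ p : Fin m₁ × Fin m₂, ‖a p.1 p.2‖ :=
          (Fintype.sum_prod_type (f := fun p : Fin m₁ × Fin m₂ =>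
            ‖a p.1 p.2‖)).symm
      _ = ∑ p : Fin m₁ × Fin m₂, ‖∑ k, C k p.1 p.2 * D k p.1 p.2‖ := by
          exact Finset.sum_congr rfl fun p _ => by rw [key p.1 p.2]
      _ ≤ ∑ p : Fin m₁ × Fin m₂, ∑ k, ‖C k p.1 p.2 * D k p.1 p.2‖ :=
          Finset.sum_le_sum fun p _ => norm_sum_le _ _
      _ = ∑ k, ∑ p : Fin m₁ × Fin m₂, ‖C k p.1 p.2‖ * ‖D k p.1 p.2‖ := by
          rw [Finset.sum_comm]
          exact Finset.sum_congr rfl fun k _ => Finset.sum_congr rfl fun p _ => norm_mul _ _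
      _ ≤ ∑ k, traceNorm (u k) * traceNorm (v k) := Finset.sum_le_sum fun k _ => hk k
  refine le_antisymm (csInf_le ⟨r₀, fun r hr => hlb r hr⟩ hmem) (le_csInf ⟨r₀, hmem⟩ hlb)
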